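/- Affine normalization commutes with parallel duplicating reduction: if P is an affine normal form of M (i.e. M →*_aff P and P has no →_aff-redex) and M ⇒_dup N, then there exists a term Q such that P ⇒_dup Q and N →*_aff Q. -/

import Mathlib

/-!
Affine reduction terminates, since the polynomial interpretation `Tm.size` decreases along
every step, and it is locally confluent; by Newman's lemma it is confluent, so `P` is the unique
affine normal form of every affine reduct of `M`. One affine step `M → M'` and one parallel step
`M ⇒ X` can always be closed: `M' →* M'' ⇒ X' *← X`. The only marked redex an affine step
can break is a beta-redex in the head of a prefix(push) redex, and one prefix(pop) step
rebuilds it. Well-founded induction along `M →* P` then carries the parallel step `M ⇒ N`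
over to `P`.
-/

variable {Loc Ch : Type}

/-- FMC terms: variable, push `[N]a.M`, pop `a<x>.M` (de Bruijn binder),
choice `i`, case `M ; i -> N`, and loop `M^i`. -/
inductive Tm (Loc Ch : Type) : Type where
  | var : ℕ → Tm Loc Ch
  | push : Tm Loc Ch → Loc → Tm Loc Ch → Tm Loc Ch
  | pop : Loc → Tm Loc Ch → Tm Loc Ch
  | choice : Ch → Tm Loc Ch
  | caseOf : Tm Loc Ch → Ch → Tm Loc Ch → Tm Loc Ch
  | loop : Tm Loc Ch → Ch → Tm Loc Ch

namespace Tm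

/-- Shift the free de Bruijn indices `≥ d` up by one. -/
def lift : Tm Loc Ch → ℕ → Tm Loc Ch
  | var n, d => if n < d then var n else var (n + 1)
  | push N a M, d => push (N.lift d) a (M.lift d)
  | pop a M, d => pop a (M.lift (d + 1))
  | choice i, _ => choice i
  | caseOf M i N, d => caseOf (M.lift d) i (N.lift d)
  | loop M i, d => loop (M.lift d) i

/-- Capture-avoiding substitution `{N/k}M` for the de Bruijn index `k`. -/
def subst : Tm Loc Ch → ℕ → Tm Loc Ch → Tm Loc Ch
  | var n, k, N => if n = k then N else if n < k then var n else var (n - 1)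
  | push P a M, k, N => push (P.subst k N) a (M.subst k N)
  | pop a M, k, N => pop a (M.subst (k + 1) (N.lift 0))
  | choice i, _, _ => choice i
  | caseOf M i P, k, N => caseOf (M.subst k N) i (P.subst k N)
  | loop M i, k, N => loop (M.subst k N) i

end Tm

/-- Affine reduction: the contextual closure of the rules passage, select,
reject, prefix(pop), prefix(push), associate. -/
inductive AffStep : Tm Loc Ch → Tm Loc Ch → Prop where
  | passage (N : Tm Loc Ch) (a b : Loc) (M : Tm Loc Ch) (h : a ≠ b) :
      AffStep (.push N b (.pop a M)) (.pop a (.push (N.lift 0) b M))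
  | select (i : Ch) (M : Tm Loc Ch) :
      AffStep (.caseOf (.choice i) i M) M
  | reject (i j : Ch) (M : Tm Loc Ch) (h : i ≠ j) :
      AffStep (.caseOf (.choice i) j M) (.choice i)
  | prefixPop (a : Loc) (N : Tm Loc Ch) (i : Ch) (M : Tm Loc Ch) :
      AffStep (.caseOf (.pop a N) i M) (.pop a (.caseOf N i (M.lift 0)))
  | prefixPush (P : Tm Loc Ch) (a : Loc) (N : Tm Loc Ch) (i : Ch) (M : Tm Loc Ch) :
      AffStep (.caseOf (.push P a N) i M) (.push P a (.caseOf N i M))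
  | assoc (P : Tm Loc Ch) (i : Ch) (N M : Tm Loc Ch) :
      AffStep (.caseOf (.caseOf P i N) i M) (.caseOf P i (.caseOf N i M))
  | push_left (N N' : Tm Loc Ch) (a : Loc) (M : Tm Loc Ch) :
      AffStep N N' → AffStep (.push N a M) (.push N' a M)
  | push_right (N : Tm Loc Ch) (a : Loc) (M M' : Tm Loc Ch) :
      AffStep M M' → AffStep (.push N a M) (.push N a M')
  | pop_body (a : Loc) (M M' : Tm Loc Ch) :
      AffStep M M' → AffStep (.pop a M) (.pop a M')
  | case_left (M M' : Tm Loc Ch) (i : Ch) (N : Tm Loc Ch) :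
      AffStep M M' → AffStep (.caseOf M i N) (.caseOf M' i N)
  | case_right (M : Tm Loc Ch) (i : Ch) (N N' : Tm Loc Ch) :
      AffStep N N' → AffStep (.caseOf M i N) (.caseOf M i N')
  | loop_body (M M' : Tm Loc Ch) (i : Ch) :
      AffStep M M' → AffStep (.loop M i) (.loop M' i)

/-- Parallel duplicating reduction `M ⇒_dup N`: `N` is the marked reduct of
`M` for some marking of beta- and unroll-redexes. -/
inductive Par : Tm Loc Ch → Tm Loc Ch → Prop where
  | var (n : ℕ) : Par (.var n) (.var n)
  | choice (i : Ch) : Par (.choice i) (.choice i)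
  | push (N N' : Tm Loc Ch) (a : Loc) (M M' : Tm Loc Ch) :
      Par N N' → Par M M' → Par (.push N a M) (.push N' a M')
  | pop (a : Loc) (M M' : Tm Loc Ch) :
      Par M M' → Par (.pop a M) (.pop a M')
  | caseOf (M M' : Tm Loc Ch) (i : Ch) (N N' : Tm Loc Ch) :
      Par M M' → Par N N' → Par (.caseOf M i N) (.caseOf M' i N')
  | loop (M M' : Tm Loc Ch) (i : Ch) :
      Par M M' → Par (.loop M i) (.loop M' i)
  | beta (N N' : Tm Loc Ch) (a : Loc) (M M' : Tm Loc Ch) :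
      Par N N' → Par M M' → Par (.push N a (.pop a M)) (M'.subst 0 N')
  | unroll (M M' : Tm Loc Ch) (i : Ch) :
      Par M M' → Par (.loop M i) (.caseOf M' i (.loop M' i))

/-- `P` is an affine normal form of `M`. -/
def AffNF (M P : Tm Loc Ch) : Prop :=
  Relation.ReflTransGen AffStep M P ∧ ∀ Q, ¬ AffStep P Q

namespace Relation

variable {α : Type*} {r s : α → α → Prop}

theorem church_rosser_of_wellFounded (hwf : WellFounded (flip r))
    (hlc : ∀ a b c, r a b → r a c → Join (ReflTransGen r) b c) {a b c : α}
    (hab : ReflTransGen r a b) (hac : ReflTransGen r a c) : Join (ReflTransGen r) b c := by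
  induction a using hwf.induction generalizing b c with
  | _ a ih =>
    rcases hab.cases_head with rfl | ⟨b₁, hab₁, hb₁b⟩
    · exact ⟨c, hac, .refl⟩
    rcases hac.cases_head with rfl | ⟨c₁, hac₁, hc₁c⟩
    · exact ⟨b, .refl, .head hab₁ hb₁b⟩
    obtain ⟨e, hb₁e, hc₁e⟩ := hlc _ _ _ hab₁ hac₁
    obtain ⟨d₁, hbd₁, hed₁⟩ := ih b₁ hab₁ hb₁b hb₁e
    obtain ⟨d, hcd, hd₁d⟩ := ih c₁ hac₁ hc₁c (hc₁e.trans hed₁)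
    exact ⟨d, hbd₁.trans hd₁d, hcd⟩

theorem ReflTransGen.eq_of_normal {a b : α} (hab : ReflTransGen r a b) (ha : ∀ c, ¬ r a c) :
    b = a := by
  rcases hab.cases_head with rfl | ⟨c, hac, -⟩
  · rfl
  · exact absurd hac (ha c)

theorem normalForm_commute (hwf : WellFounded (flip r))
    (hlc : ∀ a b c, r a b → r a c → Join (ReflTransGen r) b c)
    (hcomm : ∀ a a' x, r a a' → s a x →
      ∃ a'' x', ReflTransGen r a' a'' ∧ s a'' x' ∧ ReflTransGen r x x')
    {a p x : α} (hap : ReflTransGen r a p) (hp : ∀ q, ¬ r p q) (hax : s a x) :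
    ∃ q, s p q ∧ ReflTransGen r x q := by
  have hwf' : WellFounded (flip (TransGen r)) :=
    hwf.transGen.mono fun _ _ h => transGen_swap.mpr h
  induction a using hwf'.induction generalizing x with
  | _ a ih =>
    rcases hap.cases_head with rfl | ⟨a₁, haa₁, ha₁p⟩
    · exact ⟨x, hax, .refl⟩
    obtain ⟨a₂, x₂, ha₁a₂, ha₂x₂, hxx₂⟩ := hcomm _ _ _ haa₁ hax
    obtain ⟨d, hpd, ha₂d⟩ := church_rosser_of_wellFounded hwf hlc ha₁p ha₁a₂
    obtain rfl := hpd.eq_of_normal hp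
    obtain ⟨q, hpq, hx₂q⟩ := ih a₂ (.head' haa₁ ha₁a₂) ha₂d ha₂x₂
    exact ⟨q, hpq, hxx₂.trans hx₂q⟩

end Relation

namespace Tm

lemma lift_lift (M : Tm Loc Ch) {d e : ℕ} (h : e ≤ d) :
    (M.lift d).lift e = (M.lift e).lift (d + 1) := by
  induction M generalizing d e with
  | var n => simp only [lift]; split_ifs <;> simp only [lift] <;> split_ifs <;> first | rfl | omega
  | pop a M ih => simp [lift, ih (Nat.succ_le_succ h)]
  | _ => simp_all [lift]

lemma lift_subst_le (M N : Tm Loc Ch) {k d : ℕ} (h : d ≤ k) :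
    (M.subst k N).lift d = (M.lift d).subst (k + 1) (N.lift d) := by
  induction M generalizing k d N with
  | var n =>
    simp only [subst, lift]
    split_ifs <;> simp only [subst, lift] <;> split_ifs <;>
      first | rfl | omega | (simp only [var.injEq]; omega)
  | pop a M ih => simp [lift, subst, ih _ (Nat.succ_le_succ h), lift_lift N (Nat.zero_le d)]
  | _ => simp_all [lift, subst]

lemma lift_subst_ge (M N : Tm Loc Ch) {k d : ℕ} (h : k ≤ d) :
    (M.subst k N).lift d = (M.lift (d + 1)).subst k (N.lift d) := by
  induction M generalizing k d N with
  | var n =>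
    simp only [subst, lift]
    split_ifs <;> simp only [subst, lift] <;> split_ifs <;>
      first | rfl | omega | (simp only [var.injEq]; omega)
  | pop a M ih => simp [lift, subst, ih _ (Nat.succ_le_succ h), lift_lift N (Nat.zero_le d)]
  | _ => simp_all [lift, subst]

@[simp]
lemma subst_lift (M : Tm Loc Ch) (d : ℕ) (N : Tm Loc Ch) : (M.lift d).subst d N = M := by
  induction M generalizing d N with
  | var n => simp only [lift]; split_ifs <;> simp only [subst] <;> split_ifs <;> first | rfl | omega
  | _ => simp_all [lift, subst]

def size : Tm Loc Ch → ℕ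
  | var _ => 2
  | choice _ => 2
  | push N _ M => size N + 2 * size M
  | pop _ M => size M + 1
  | caseOf M _ N => size M * size M * size N
  | loop M _ => size M + 1

lemma two_le_size (M : Tm Loc Ch) : 2 ≤ size M := by
  induction M <;> simp only [size] <;> nlinarith

@[simp]
lemma size_lift (M : Tm Loc Ch) (d : ℕ) : size (M.lift d) = size M := by
  induction M generalizing d with
  | var n => simp only [lift]; split_ifs <;> rfl
  | _ => simp_all [lift, size]

end Tm

open Tm

namespace AffStep

lemma size_lt {M M' : Tm Loc Ch} (h : AffStep M M') : size M' < size M := by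
  induction h with
  | select _ M => simp only [size]; nlinarith [two_le_size M]
  | reject _ _ M => simp only [size]; nlinarith [two_le_size M]
  | prefixPop _ N _ M => simp only [size, size_lift]; nlinarith [two_le_size M, two_le_size N]
  | prefixPush P a N i M =>
    have hP := two_le_size P; have hN := two_le_size N; have hM := two_le_size M
    simp only [size]
    nlinarith [Nat.mul_le_mul hP hM, Nat.mul_le_mul hN hM, Nat.mul_le_mul (Nat.mul_le_mul hP hP) hM]
  | assoc P i N M =>
    have hP := two_le_size P; have hN := two_le_size N; have hM := two_le_size M
    have : 0 < size P * size P * (size N * size N * size M) := by positivity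
    simp only [size]
    nlinarith [Nat.mul_le_mul hP hP]
  | case_left _ _ _ N _ ih =>
    exact Nat.mul_lt_mul_of_pos_right (Nat.mul_self_lt_mul_self ih)
      (Nat.zero_lt_of_lt (two_le_size N))
  | case_right M _ _ _ _ ih =>
    simp only [size]; nlinarith [two_le_size M]
  | _ => simp only [size, size_lift] at *; omega

theorem wellFounded_flip : WellFounded (flip (@AffStep Loc Ch)) :=
  Subrelation.wf (fun h => size_lt h) (measure size).wf

lemma lift {M M' : Tm Loc Ch} (h : AffStep M M') (d : ℕ) : AffStep (M.lift d) (M'.lift d) := by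
  induction h generalizing d with
  | passage N a b M h =>
    simpa [Tm.lift, lift_lift N (Nat.zero_le d)] using passage (N.lift d) a b (M.lift (d + 1)) h
  | prefixPop a N i M =>
    simpa [Tm.lift, lift_lift M (Nat.zero_le d)] using prefixPop a (N.lift (d + 1)) i (M.lift d)
  | select => exact select _ _
  | reject _ _ _ h => exact reject _ _ _ h
  | prefixPush => exact prefixPush _ _ _ _ _
  | assoc => exact assoc _ _ _ _
  | push_left _ _ _ _ _ ih => exact push_left _ _ _ _ (ih d)
  | push_right _ _ _ _ _ ih => exact push_right _ _ _ _ (ih d)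
  | pop_body _ _ _ _ ih => exact pop_body _ _ _ (ih (d + 1))
  | case_left _ _ _ _ _ ih => exact case_left _ _ _ _ (ih d)
  | case_right _ _ _ _ _ ih => exact case_right _ _ _ _ (ih d)
  | loop_body _ _ _ _ ih => exact loop_body _ _ _ (ih d)

lemma subst {M M' : Tm Loc Ch} (h : AffStep M M') (k : ℕ) (P : Tm Loc Ch) :
    AffStep (M.subst k P) (M'.subst k P) := by
  induction h generalizing k P with
  | passage N a b M h =>
    simpa [Tm.subst, lift_subst_le N P (Nat.zero_le k)] using
      passage (N.subst k P) a b (M.subst (k + 1) (P.lift 0)) h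
  | prefixPop a N i M =>
    simpa [Tm.subst, lift_subst_le M P (Nat.zero_le k)] using
      prefixPop a (N.subst (k + 1) (P.lift 0)) i (M.subst k P)
  | select => exact select _ _
  | reject _ _ _ h => exact reject _ _ _ h
  | prefixPush => exact prefixPush _ _ _ _ _
  | assoc => exact assoc _ _ _ _
  | push_left _ _ _ _ _ ih => exact push_left _ _ _ _ (ih k P)
  | push_right _ _ _ _ _ ih => exact push_right _ _ _ _ (ih k P)
  | pop_body _ _ _ _ ih => exact pop_body _ _ _ (ih (k + 1) (P.lift 0))
  | case_left _ _ _ _ _ ih => exact case_left _ _ _ _ (ih k P)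
  | case_right _ _ _ _ _ ih => exact case_right _ _ _ _ (ih k P)
  | loop_body _ _ _ _ ih => exact loop_body _ _ _ (ih k P)

end AffStep

/-- Affine reduction `→*_aff`. -/
abbrev AffRed : Tm Loc Ch → Tm Loc Ch → Prop := Relation.ReflTransGen AffStep

namespace AffRed

variable {M M' N N' : Tm Loc Ch}

lemma push_left (h : AffRed N N') (a : Loc) (M : Tm Loc Ch) :
    AffRed (.push N a M) (.push N' a M) :=
  Relation.ReflTransGen.lift _ (fun _ _ s => AffStep.push_left _ _ _ _ s) _ _ h

lemma push_right (N : Tm Loc Ch) (a : Loc) (h : AffRed M M') :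
    AffRed (.push N a M) (.push N a M') :=
  Relation.ReflTransGen.lift _ (fun _ _ s => AffStep.push_right _ _ _ _ s) _ _ h

lemma pop (a : Loc) (h : AffRed M M') : AffRed (.pop a M) (.pop a M') :=
  Relation.ReflTransGen.lift _ (fun _ _ s => AffStep.pop_body _ _ _ s) _ _ h

lemma case_left (h : AffRed M M') (i : Ch) (N : Tm Loc Ch) :
    AffRed (.caseOf M i N) (.caseOf M' i N) :=
  Relation.ReflTransGen.lift _ (fun _ _ s => AffStep.case_left _ _ _ _ s) _ _ h

lemma case_right (M : Tm Loc Ch) (i : Ch) (h : AffRed N N') :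
    AffRed (.caseOf M i N) (.caseOf M i N') :=
  Relation.ReflTransGen.lift _ (fun _ _ s => AffStep.case_right _ _ _ _ s) _ _ h

lemma loop (h : AffRed M M') (i : Ch) : AffRed (.loop M i) (.loop M' i) :=
  Relation.ReflTransGen.lift _ (fun _ _ s => AffStep.loop_body _ _ _ s) _ _ h

lemma push (hN : AffRed N N') (a : Loc) (hM : AffRed M M') :
    AffRed (.push N a M) (.push N' a M') :=
  (hN.push_left a M).trans (push_right N' a hM)

lemma caseOf (hM : AffRed M M') (i : Ch) (hN : AffRed N N') :
    AffRed (.caseOf M i N) (.caseOf M' i N') :=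
  (hM.case_left i N).trans (case_right M' i hN)

lemma lift (h : AffRed M M') (d : ℕ) : AffRed (M.lift d) (M'.lift d) :=
  Relation.ReflTransGen.lift (Tm.lift · d) (fun _ _ s => AffStep.lift s d) _ _ h

lemma subst (h : AffRed M M') (k : ℕ) (P : Tm Loc Ch) : AffRed (M.subst k P) (M'.subst k P) :=
  Relation.ReflTransGen.lift (Tm.subst · k P) (fun _ _ s => AffStep.subst s k P) _ _ h

lemma subst_right (M : Tm Loc Ch) (k : ℕ) (h : AffRed N N') :
    AffRed (M.subst k N) (M.subst k N') := by
  induction M generalizing k N N' with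
  | var n =>
    simp only [Tm.subst]
    split_ifs
    exacts [h, .refl, .refl]
  | push P a M ihP ihM => exact (ihP k h).push a (ihM k h)
  | pop a M ih => exact (ih (k + 1) (h.lift 0)).pop a
  | choice i => exact .refl
  | caseOf M i P ihM ihP => exact (ihM k h).caseOf i (ihP k h)
  | loop M i ih => exact (ih k h).loop i

lemma exists_eq_pop {a : Loc} {K : Tm Loc Ch} (h : AffRed (.pop a M) K) :
    ∃ M', K = .pop a M' ∧ AffRed M M' := by
  induction h with
  | refl => exact ⟨M, rfl, .refl⟩
  | tail _ s ih =>
    obtain ⟨M', rfl, hM⟩ := ih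
    cases s with
    | pop_body _ _ M'' s => exact ⟨M'', rfl, hM.tail s⟩

end AffRed

namespace Par

lemma lift {M M' : Tm Loc Ch} (h : Par M M') (d : ℕ) : Par (M.lift d) (M'.lift d) := by
  induction h generalizing d with
  | var n => simp only [Tm.lift]; split_ifs <;> exact var _
  | choice i => exact choice i
  | push _ _ _ _ _ _ _ ihN ihM => exact push _ _ _ _ _ (ihN d) (ihM d)
  | pop _ _ _ _ ih => exact pop _ _ _ (ih (d + 1))
  | caseOf _ _ _ _ _ _ _ ihM ihN => exact caseOf _ _ _ _ _ (ihM d) (ihN d)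
  | loop _ _ _ _ ih => exact loop _ _ _ (ih d)
  | beta N N' a M M' _ _ ihN ihM =>
    simpa [Tm.lift, lift_subst_ge M' N' (Nat.zero_le d)] using
      beta _ _ a _ _ (ihN d) (ihM (d + 1))
  | unroll _ _ _ _ ih => exact unroll _ _ _ (ih d)

lemma exists_eq_pop {a : Loc} {M K : Tm Loc Ch} (h : Par (.pop a M) K) :
    ∃ M', K = .pop a M' ∧ Par M M' := by
  cases h with
  | pop _ _ M' hM => exact ⟨M', rfl, hM⟩

end Par

namespace AffStep

open Relation (Join)

variable {a b : Loc} {i j : Ch} {M N P K : Tm Loc Ch}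

lemma join_passage (h : a ≠ b) (hK : AffStep (.push N b (.pop a M)) K) :
    Join AffRed (.pop a (.push (N.lift 0) b M)) K := by
  cases hK with
  | passage => exact ⟨_, .refl, .refl⟩
  | push_left _ N' _ _ s =>
    exact ⟨_, .single (pop_body _ _ _ (push_left _ _ _ _ (s.lift 0))),
      .single (passage N' a b M h)⟩
  | push_right _ _ _ _ s =>
    cases s with
    | pop_body _ _ M' s =>
      exact ⟨_, .single (pop_body _ _ _ (push_right _ _ _ _ s)), .single (passage N a b M' h)⟩

lemma join_select (hK : AffStep (.caseOf (.choice i) i M) K) : Join AffRed M K := by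
  cases hK with
  | select => exact ⟨_, .refl, .refl⟩
  | reject _ _ _ h => exact absurd rfl h
  | case_left _ _ _ _ s => nomatch s
  | case_right _ _ _ M' s => exact ⟨M', .single s, .single (select i M')⟩

lemma join_reject (h : i ≠ j) (hK : AffStep (.caseOf (.choice i) j M) K) :
    Join AffRed (.choice i) K := by
  cases hK with
  | reject => exact ⟨_, .refl, .refl⟩
  | select => exact absurd rfl h
  | case_left _ _ _ _ s => nomatch s
  | case_right _ _ _ M' s => exact ⟨_, .refl, .single (reject i j M' h)⟩

lemma join_prefixPop (hK : AffStep (.caseOf (.pop a N) i M) K) :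
    Join AffRed (.pop a (.caseOf N i (M.lift 0))) K := by
  cases hK with
  | prefixPop => exact ⟨_, .refl, .refl⟩
  | case_left _ _ _ _ s =>
    cases s with
    | pop_body _ _ N' s =>
      exact ⟨_, .single (pop_body _ _ _ (case_left _ _ _ _ s)), .single (prefixPop a N' i M)⟩
  | case_right _ _ _ M' s =>
    exact ⟨_, .single (pop_body _ _ _ (case_right _ _ _ _ (s.lift 0))),
      .single (prefixPop a N i M')⟩

lemma join_prefixPush (hK : AffStep (.caseOf (.push P a N) i M) K) :
    Join AffRed (.push P a (.caseOf N i M)) K := by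
  cases hK with
  | prefixPush => exact ⟨_, .refl, .refl⟩
  | case_left _ _ _ _ s =>
    cases s with
    | passage _ b _ N' h =>
      exact ⟨_, .head (push_right _ _ _ _ (prefixPop b N' i M)) (.single (passage _ _ _ _ h)),
        .head (prefixPop b _ i M) (.single (pop_body _ _ _ (prefixPush _ _ _ _ _)))⟩
    | push_left _ P' _ _ s =>
      exact ⟨_, .single (push_left _ _ _ _ s), .single (prefixPush P' a N i M)⟩
    | push_right _ _ _ N' s =>
      exact ⟨_, .single (push_right _ _ _ _ (case_left _ _ _ _ s)),
        .single (prefixPush P a N' i M)⟩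
  | case_right _ _ _ M' s =>
    exact ⟨_, .single (push_right _ _ _ _ (case_right _ _ _ _ s)),
      .single (prefixPush P a N i M')⟩

lemma join_assoc (hK : AffStep (.caseOf (.caseOf P i N) i M) K) :
    Join AffRed (.caseOf P i (.caseOf N i M)) K := by
  cases hK with
  | assoc => exact ⟨_, .refl, .refl⟩
  | case_left _ _ _ _ s =>
    cases s with
    | select => exact ⟨_, .single (select i _), .refl⟩
    | reject k _ _ h => exact ⟨_, .single (reject k i _ h), .single (reject k i M h)⟩
    | prefixPop b P =>
      exact ⟨_, .single (prefixPop b P i _),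
        .head (prefixPop b _ i M) (.single (pop_body _ _ _ (assoc _ _ _ _)))⟩
    | prefixPush Q b P =>
      exact ⟨_, .single (prefixPush Q b P i _),
        .head (prefixPush Q b _ i M) (.single (push_right _ _ _ _ (assoc _ _ _ _)))⟩
    | assoc P _ N₀ =>
      exact ⟨_, .single (assoc P i N₀ _),
        .head (assoc P i _ M) (.single (case_right _ _ _ _ (assoc _ _ _ _)))⟩
    | case_left _ P' _ _ s => exact ⟨_, .single (case_left _ _ _ _ s), .single (assoc P' i N M)⟩
    | case_right _ _ _ N' s =>
      exact ⟨_, .single (case_right _ _ _ _ (case_left _ _ _ _ s)), .single (assoc P i N' M)⟩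
  | case_right _ _ _ M' s =>
    exact ⟨_, .single (case_right _ _ _ _ (case_right _ _ _ _ s)), .single (assoc P i N M')⟩

lemma join_push_left {N' : Tm Loc Ch} (s : AffStep N N')
    (ih : ∀ {K}, AffStep N K → Join AffRed N' K) (hK : AffStep (.push N a M) K) :
    Join AffRed (.push N' a M) K := by
  cases hK with
  | passage _ _ _ _ h => exact symm_of _ (join_passage h (push_left _ _ _ _ s))
  | push_left _ _ _ _ s' =>
    obtain ⟨_, h₁, h₂⟩ := ih s'
    exact ⟨_, h₁.push_left a M, h₂.push_left a M⟩
  | push_right _ _ _ _ s' =>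
    exact ⟨_, .single (push_right _ _ _ _ s'), .single (push_left _ _ _ _ s)⟩

lemma join_push_right {M' : Tm Loc Ch} (s : AffStep M M')
    (ih : ∀ {K}, AffStep M K → Join AffRed M' K) (hK : AffStep (.push N a M) K) :
    Join AffRed (.push N a M') K := by
  cases hK with
  | passage _ _ _ _ h => exact symm_of _ (join_passage h (push_right _ _ _ _ s))
  | push_left _ _ _ _ s' =>
    exact ⟨_, .single (push_left _ _ _ _ s'), .single (push_right _ _ _ _ s)⟩
  | push_right _ _ _ _ s' =>
    obtain ⟨_, h₁, h₂⟩ := ih s'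
    exact ⟨_, h₁.push_right N a, h₂.push_right N a⟩

lemma join_case_left {M' : Tm Loc Ch} (s : AffStep M M')
    (ih : ∀ {K}, AffStep M K → Join AffRed M' K) (hK : AffStep (.caseOf M i N) K) :
    Join AffRed (.caseOf M' i N) K := by
  cases hK with
  | select | reject => nomatch s
  | prefixPop => exact symm_of _ (join_prefixPop (case_left _ _ _ _ s))
  | prefixPush => exact symm_of _ (join_prefixPush (case_left _ _ _ _ s))
  | assoc => exact symm_of _ (join_assoc (case_left _ _ _ _ s))
  | case_left _ _ _ _ s' =>
    obtain ⟨_, h₁, h₂⟩ := ih s'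
    exact ⟨_, h₁.case_left i N, h₂.case_left i N⟩
  | case_right _ _ _ _ s' =>
    exact ⟨_, .single (case_right _ _ _ _ s'), .single (case_left _ _ _ _ s)⟩

lemma join_case_right {N' : Tm Loc Ch} (s : AffStep N N')
    (ih : ∀ {K}, AffStep N K → Join AffRed N' K) (hK : AffStep (.caseOf M i N) K) :
    Join AffRed (.caseOf M i N') K := by
  cases hK with
  | select => exact symm_of _ (join_select (case_right _ _ _ _ s))
  | reject _ _ _ h => exact symm_of _ (join_reject h (case_right _ _ _ _ s))
  | prefixPop => exact symm_of _ (join_prefixPop (case_right _ _ _ _ s))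
  | prefixPush => exact symm_of _ (join_prefixPush (case_right _ _ _ _ s))
  | assoc => exact symm_of _ (join_assoc (case_right _ _ _ _ s))
  | case_left _ _ _ _ s' =>
    exact ⟨_, .single (case_left _ _ _ _ s'), .single (case_right _ _ _ _ s)⟩
  | case_right _ _ _ _ s' =>
    obtain ⟨_, h₁, h₂⟩ := ih s'
    exact ⟨_, h₁.case_right M i, h₂.case_right M i⟩

theorem join {K₁ K₂ : Tm Loc Ch} (h₁ : AffStep M K₁) (h₂ : AffStep M K₂) :
    Join AffRed K₁ K₂ := by
  induction h₁ generalizing K₂ with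
  | passage _ _ _ _ h => exact join_passage h h₂
  | select => exact join_select h₂
  | reject _ _ _ h => exact join_reject h h₂
  | prefixPop => exact join_prefixPop h₂
  | prefixPush => exact join_prefixPush h₂
  | assoc => exact join_assoc h₂
  | push_left _ _ _ _ s ih => exact join_push_left s ih h₂
  | push_right _ _ _ _ s ih => exact join_push_right s ih h₂
  | case_left _ _ _ _ s ih => exact join_case_left s ih h₂
  | case_right _ _ _ _ s ih => exact join_case_right s ih h₂
  | pop_body a _ _ _ ih =>
    cases h₂ with
    | pop_body _ _ _ s' =>
      obtain ⟨_, h₁, h₂⟩ := ih s'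
      exact ⟨_, h₁.pop a, h₂.pop a⟩
  | loop_body _ _ i _ ih =>
    cases h₂ with
    | loop_body _ _ _ s' =>
      obtain ⟨_, h₁, h₂⟩ := ih s'
      exact ⟨_, h₁.loop i, h₂.loop i⟩

end AffStep

def ParJoinable (M X : Tm Loc Ch) : Prop :=
  ∃ M' X', AffRed M M' ∧ Par M' X' ∧ AffRed X X'

namespace AffStep

variable {a b : Loc} {i j : Ch} {M M' N P X : Tm Loc Ch}

lemma parJoinable_passage (h : a ≠ b) (hX : Par (.push N b (.pop a M)) X) :
    ParJoinable (.pop a (.push (N.lift 0) b M)) X := by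
  cases hX with
  | push _ N' _ _ K hN hK =>
    obtain ⟨M', rfl, hM⟩ := hK.exists_eq_pop
    exact ⟨_, _, .refl, .pop _ _ _ (.push _ _ _ _ _ (hN.lift 0) hM),
      .single (passage N' a b M' h)⟩
  | beta => exact absurd rfl h

lemma parJoinable_select (hX : Par (.caseOf (.choice i) i M) X) : ParJoinable M X := by
  cases hX with
  | caseOf _ _ _ _ M' hi hM =>
    cases hi
    exact ⟨_, _, .refl, hM, .single (select i M')⟩

lemma parJoinable_reject (h : i ≠ j) (hX : Par (.caseOf (.choice i) j M) X) :
    ParJoinable (.choice i) X := by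
  cases hX with
  | caseOf _ _ _ _ M' hi hM =>
    cases hi
    exact ⟨_, _, .refl, .choice i, .single (reject i j M' h)⟩

lemma parJoinable_prefixPop (hX : Par (.caseOf (.pop a N) i M) X) :
    ParJoinable (.pop a (.caseOf N i (M.lift 0))) X := by
  cases hX with
  | caseOf _ K _ _ M' hK hM =>
    obtain ⟨N', rfl, hN⟩ := hK.exists_eq_pop
    exact ⟨_, _, .refl, .pop _ _ _ (.caseOf _ _ _ _ _ hN (hM.lift 0)),
      .single (prefixPop a N' i M')⟩

lemma parJoinable_prefixPush (hX : Par (.caseOf (.push P a N) i M) X) :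
    ParJoinable (.push P a (.caseOf N i M)) X := by
  cases hX with
  | caseOf _ K _ _ M' hK hM =>
    cases hK with
    | push _ P' _ _ N' hP hN =>
      exact ⟨_, _, .refl, .push _ _ _ _ _ hP (.caseOf _ _ _ _ _ hN hM),
        .single (prefixPush P' a N' i M')⟩
    | beta _ P' _ N₀ N' hP hN =>
      -- the marked beta-redex reappears after one prefix(pop) step inside the push
      refine ⟨_, _, .single (push_right _ _ _ _ (prefixPop a N₀ i M)),
        .beta _ _ _ _ _ hP (.caseOf _ _ _ _ _ hN (hM.lift 0)), ?_⟩
      simp only [Tm.subst, subst_lift]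
      exact .refl

lemma parJoinable_assoc (hX : Par (.caseOf (.caseOf P i N) i M) X) :
    ParJoinable (.caseOf P i (.caseOf N i M)) X := by
  cases hX with
  | caseOf _ K _ _ M' hK hM =>
    cases hK with
    | caseOf _ P' _ _ N' hP hN =>
      exact ⟨_, _, .refl, .caseOf _ _ _ _ _ hP (.caseOf _ _ _ _ _ hN hM),
        .single (assoc P' i N' M')⟩

lemma parJoinable_push_left {N' : Tm Loc Ch} (ih : ∀ {X}, Par N X → ParJoinable N' X)
    (hX : Par (.push N a M) X) : ParJoinable (.push N' a M) X := by
  cases hX with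
  | push _ _ _ _ M₁ hN hM =>
    obtain ⟨_, _, hN', hPar, hN₁⟩ := ih hN
    exact ⟨_, _, hN'.push_left a M, .push _ _ _ _ _ hPar hM, hN₁.push_left a M₁⟩
  | beta _ _ _ _ M₁ hN hM =>
    obtain ⟨_, _, hN', hPar, hN₁⟩ := ih hN
    exact ⟨_, _, hN'.push_left a _, .beta _ _ _ _ _ hPar hM, .subst_right M₁ 0 hN₁⟩

lemma parJoinable_push_right (s : AffStep M M') (ih : ∀ {X}, Par M X → ParJoinable M' X)
    (hX : Par (.push N a M) X) : ParJoinable (.push N a M') X := by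
  cases hX with
  | push _ N₁ _ _ _ hN hM =>
    obtain ⟨_, _, hM', hPar, hM₁⟩ := ih hM
    exact ⟨_, _, .push_right N a hM', .push _ _ _ _ _ hN hPar, .push_right N₁ a hM₁⟩
  | beta _ N₁ _ M₀ M₁ hN hM =>
    -- `s` steps inside the pop, so the beta-redex survives on both sides
    obtain ⟨_, _, hK', hPar, hK₁⟩ := ih (.pop a M₀ M₁ hM)
    cases s
    obtain ⟨_, rfl, -⟩ := hK'.exists_eq_pop
    obtain ⟨_, rfl, hQ⟩ := hPar.exists_eq_pop
    obtain ⟨_, hR, hM₁R⟩ := hK₁.exists_eq_pop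
    cases hR
    exact ⟨_, _, .push_right N a hK', .beta _ _ _ _ _ hN hQ, hM₁R.subst 0 N₁⟩

theorem parJoinable (h : AffStep M M') (hX : Par M X) : ParJoinable M' X := by
  induction h generalizing X with
  | passage _ _ _ _ h => exact parJoinable_passage h hX
  | select => exact parJoinable_select hX
  | reject _ _ _ h => exact parJoinable_reject h hX
  | prefixPop => exact parJoinable_prefixPop hX
  | prefixPush => exact parJoinable_prefixPush hX
  | assoc => exact parJoinable_assoc hX
  | push_left _ _ _ _ _ ih => exact parJoinable_push_left ih hX
  | push_right _ _ _ _ s ih => exact parJoinable_push_right s ih hX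
  | pop_body a _ _ _ ih =>
    cases hX with
    | pop _ _ _ hM =>
      obtain ⟨_, _, hM', hPar, hM₁⟩ := ih hM
      exact ⟨_, _, hM'.pop a, .pop _ _ _ hPar, hM₁.pop a⟩
  | case_left _ _ i N _ ih =>
    cases hX with
    | caseOf _ _ _ _ N₁ hM hN =>
      obtain ⟨_, _, hM', hPar, hM₁⟩ := ih hM
      exact ⟨_, _, hM'.case_left i N, .caseOf _ _ _ _ _ hPar hN, hM₁.case_left i N₁⟩
  | case_right M i _ _ _ ih =>
    cases hX with
    | caseOf _ M₁ _ _ _ hM hN =>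
      obtain ⟨_, _, hN', hPar, hN₁⟩ := ih hN
      exact ⟨_, _, .case_right M i hN', .caseOf _ _ _ _ _ hM hPar, .case_right M₁ i hN₁⟩
  | loop_body _ _ i _ ih =>
    cases hX with
    | loop _ _ _ hM =>
      obtain ⟨_, _, hM', hPar, hM₁⟩ := ih hM
      exact ⟨_, _, hM'.loop i, .loop _ _ _ hPar, hM₁.loop i⟩
    | unroll _ _ _ hM =>
      obtain ⟨_, _, hM', hPar, hM₁⟩ := ih hM
      exact ⟨_, _, hM'.loop i, .unroll _ _ _ hPar, hM₁.caseOf i (hM₁.loop i)⟩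

end AffStep

/-- Affine normalization commutes with parallel duplicating reduction. -/
theorem affnf_commutes_with_par (M N P : Tm Loc Ch) (hP : AffNF M P) (hN : Par M N) :
    ∃ Q : Tm Loc Ch, Par P Q ∧ Relation.ReflTransGen AffStep N Q :=
  Relation.normalForm_commute AffStep.wellFounded_flip (fun _ _ _ => AffStep.join)
    (fun _ _ _ => AffStep.parJoinable) hP.1 hP.2 hN
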